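/- arXiv:2410.07882 — 4 statements merged into one kernel-verified Lean document; each statement's English description precedes it below -/
import Mathlib

section
/- Jacobi's triple product identity (analytic form): for all complex numbers q and z with |q| < 1 and z ≠ 0, the series ∑_{m ∈ ℤ} (-1)^m q^{m(m-1)/2} z^m converges absolutely and equals the (absolutely convergent) infinite product ∏_{n=1}^{∞} (1 - q^n)(1 - q^n z^{-1})(1 - q^{n-1} z). -/
/-!
Cauchy's `q`-binomial theorem `∏_{j < 2N} (1 + x qʲ) = ∑ₖ q^(k(k-1)/2) [2N choose k]_q xᵏ`,
taken at `x = -z q⁻ᴺ`, gives the finite identity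
`(q; q)_N ∏_{n < N} (1 - qⁿ⁺¹ z⁻¹)(1 - qⁿ z) = ∑_{|m| ≤ N} (-1)^m q^(m(m-1)/2) zᵐ w_N(m)` with
`w_N(m) = (q; q)_N (q; q)_{2N} / ((q; q)_{N+m} (q; q)_{N-m})`. For `|q| < 1` the products
`(q; q)_n` converge to a nonzero limit, so the weights `w_N(m)` are uniformly bounded and tend to
`1` as `N → ∞`; dominated convergence for series (Tannery's theorem) then lets `N → ∞` on the
right, while the left tends to the infinite product. At `q = 0` both sides are `1 - z`.
-/

open Finset Filter Topology

/-- `m.choose 2` extended to all integers; `toNat` loses nothing since `m (m - 1) / 2 ≥ 0`. -/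
def triangular (m : ℤ) : ℕ := (m * (m - 1) / 2).toNat

lemma two_mul_triangular (m : ℤ) : 2 * (triangular m : ℤ) = m * (m - 1) := by
  have hev : 2 ∣ m * (m - 1) := (Int.even_mul_pred_self m).two_dvd
  have hnn : 0 ≤ m * (m - 1) := by
    rcases le_or_gt m 0 with h | h <;> nlinarith
  rw [triangular, Int.toNat_of_nonneg (Int.ediv_nonneg hnn zero_le_two)]
  exact Int.mul_ediv_cancel' hev

lemma triangular_add (a b : ℤ) :
    (triangular (a + b) : ℤ) = triangular a + triangular b + a * b := by
  linarith [two_mul_triangular (a + b), two_mul_triangular a, two_mul_triangular b]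

lemma triangular_natCast_add_one (n : ℕ) : triangular ((n : ℤ) + 1) = triangular n + n := by
  have h := triangular_add n 1
  have h1 : triangular 1 = 0 := rfl
  omega

lemma triangular_neg_natCast_sub_one (n : ℕ) :
    triangular (-(n : ℤ) - 1) = triangular (-(n : ℤ)) + (n + 1) := by
  have h := triangular_add (-(n : ℤ)) (-1)
  have h1 : triangular (-1) = 1 := rfl
  rw [← sub_eq_add_neg] at h
  omega

lemma triangular_natCast (n : ℕ) : triangular n = ∑ i ∈ range n, i := by
  induction n with
  | zero => rfl
  | succ n ih => rw [sum_range_succ, ← ih, Nat.cast_succ, triangular_natCast_add_one]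

lemma triangular_ne_zero {m : ℤ} (h₀ : m ≠ 0) (h₁ : m ≠ 1) : triangular m ≠ 0 := by
  intro h
  have := two_mul_triangular m
  rw [h, Nat.cast_zero, mul_zero, eq_comm, mul_eq_zero, sub_eq_zero] at this
  tauto

section GaussianBinomial

variable {R : Type*} [CommRing R] (q : R)

/-- The Gaussian binomial coefficient `[n choose k]_q`. -/
def qBinomial : ℕ → ℕ → R
  | _, 0 => 1
  | 0, _ + 1 => 0
  | n + 1, k + 1 => qBinomial n k + q ^ (k + 1) * qBinomial n (k + 1)

@[simp] lemma qBinomial_zero_right (n : ℕ) : qBinomial q n 0 = 1 := by cases n <;> rfl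

lemma qBinomial_succ_succ (n k : ℕ) :
    qBinomial q (n + 1) (k + 1) = qBinomial q n k + q ^ (k + 1) * qBinomial q n (k + 1) := rfl

lemma qBinomial_eq_zero_of_lt : ∀ {n k : ℕ}, n < k → qBinomial q n k = 0
  | 0, _ + 1, _ => rfl
  | n + 1, k + 1, h => by
    rw [qBinomial_succ_succ, qBinomial_eq_zero_of_lt (by omega),
      qBinomial_eq_zero_of_lt (by omega), mul_zero, add_zero]

@[simp] lemma qBinomial_self : ∀ n : ℕ, qBinomial q n n = 1
  | 0 => rfl
  | n + 1 => by
    rw [qBinomial_succ_succ, qBinomial_self n, qBinomial_eq_zero_of_lt q (Nat.lt_succ_self n),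
      mul_zero, add_zero]

/-- Cauchy's `q`-binomial theorem. -/
theorem prod_one_add_mul_pow_eq_sum (n : ℕ) (x : R) :
    ∏ j ∈ range n, (1 + x * q ^ j) =
      ∑ k ∈ range (n + 1), q ^ triangular k * qBinomial q n k * x ^ k := by
  induction n generalizing x with
  | zero => simp [triangular]
  | succ n ih =>
    set a : ℕ → R := fun k => q ^ triangular ((k : ℤ) + 1) * qBinomial q n k * x ^ k with ha
    have hshift : ∀ k : ℕ, q ^ triangular k * qBinomial q n k * (x * q) ^ k = a k := fun k => by
      simp only [ha, triangular_natCast_add_one, pow_add]; ring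
    have hlast : a (n + 1) = 0 := by simp [ha, qBinomial_eq_zero_of_lt q (Nat.lt_succ_self n)]
    calc ∏ j ∈ range (n + 1), (1 + x * q ^ j)
        = (∏ j ∈ range n, (1 + (x * q) * q ^ j)) * (1 + x) := by
          rw [prod_range_succ']; simp only [pow_succ, pow_zero, mul_one, mul_assoc, mul_comm q]
      _ = ∑ k ∈ range (n + 1), a k + x * ∑ k ∈ range (n + 1), a k := by
          rw [ih, sum_congr rfl fun k _ => hshift k]; ring
      _ = ∑ k ∈ range (n + 1), (a (k + 1) + x * a k) + a 0 := by
          rw [sum_add_distrib, ← mul_sum, add_right_comm, ← sum_range_succ' a (n + 1),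
            sum_range_succ a (n + 1), hlast, add_zero]
      _ = _ := by
          rw [sum_range_succ' _ (n + 1)]
          congr 1
          · refine sum_congr rfl fun k _ => ?_
            simp only [ha]
            rw [qBinomial_succ_succ, triangular_natCast_add_one (k + 1), Nat.cast_succ,
              triangular_natCast_add_one k]
            ring
          · simp [ha, triangular]

/-- The `q`-Pochhammer symbol `(q; q)_n`. -/
def qPochhammer (n : ℕ) : R := ∏ j ∈ range n, (1 - q ^ (j + 1))

lemma qPochhammer_succ (n : ℕ) : qPochhammer q (n + 1) = qPochhammer q n * (1 - q ^ (n + 1)) :=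
  prod_range_succ _ _

theorem qBinomial_mul_qPochhammer_mul_qPochhammer (k d : ℕ) :
    qBinomial q (k + d) k * qPochhammer q k * qPochhammer q d = qPochhammer q (k + d) := by
  induction k generalizing d with
  | zero => simp [qPochhammer]
  | succ k ihk =>
    induction d with
    | zero => simp [qPochhammer]
    | succ d ihd =>
      have h₁ := ihk (d + 1)
      rw [qPochhammer_succ, ← add_assoc] at h₁
      rw [qPochhammer_succ, add_right_comm] at ihd
      rw [show k + 1 + (d + 1) = k + d + 1 + 1 by omega, qBinomial_succ_succ, qPochhammer_succ,
        qPochhammer_succ, qPochhammer_succ, show k + d + 1 + 1 = (k + 1) + (d + 1) by omega,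
        pow_add q (k + 1)]
      linear_combination (1 - q ^ (k + 1)) * h₁ + q ^ (k + 1) * (1 - q ^ (d + 1)) * ihd

def jacobiWeight (N : ℕ) (m : ℤ) : R :=
  if m.natAbs ≤ N then qPochhammer q N * qBinomial q (2 * N) (N + m).toNat else 0

end GaussianBinomial

def jacobiTerm {K : Type*} [DivisionRing K] (q z : K) (m : ℤ) : K :=
  (-1) ^ m * q ^ triangular m * z ^ m

section FiniteIdentity

variable {K : Type*} [Field K] {q z : K}

lemma pow_triangular_mul_pow_eq_mul_jacobiTerm (hq₀ : q ≠ 0) (hz : z ≠ 0) (N : ℕ) {m : ℤ}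
    (hm : 0 ≤ (N : ℤ) + m) :
    q ^ triangular ((N + m).toNat : ℤ) * (-(z * (q ^ N)⁻¹)) ^ (N + m).toNat =
      (-(z * (q ^ N)⁻¹)) ^ N * q ^ triangular N * jacobiTerm q z m := by
  set x := -(z * (q ^ N)⁻¹)
  have hx : x ≠ 0 := by simp [x, hq₀, hz]
  have hq₀' : q ^ triangular ((N + m).toNat : ℤ) =
      q ^ triangular N * q ^ triangular m * q ^ ((N : ℤ) * m) := by
    rw [Int.toNat_of_nonneg hm, ← zpow_natCast, triangular_add,
      zpow_add₀ hq₀, zpow_add₀ hq₀, zpow_natCast, zpow_natCast]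
  have hx' : x ^ (N + m).toNat = x ^ N * ((-1) ^ m * z ^ m * (q ^ ((N : ℤ) * m))⁻¹) := by
    rw [← zpow_natCast, Int.toNat_of_nonneg hm, zpow_add₀ hx, zpow_natCast, zpow_mul,
      zpow_natCast, ← inv_zpow, ← mul_zpow, ← mul_zpow]
    congr 2
    ring
  rw [hq₀', hx', jacobiTerm]
  have : q ^ ((N : ℤ) * m) ≠ 0 := zpow_ne_zero _ hq₀
  field_simp

lemma prod_one_add_mul_pow_eq_mul_prod (hq₀ : q ≠ 0) (hz : z ≠ 0) (N : ℕ) :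
    ∏ j ∈ range (2 * N), (1 + -(z * (q ^ N)⁻¹) * q ^ j) =
      (-(z * (q ^ N)⁻¹)) ^ N * q ^ triangular N *
        ∏ n ∈ range N, ((1 - q ^ (n + 1) * z⁻¹) * (1 - q ^ n * z)) := by
  set x := -(z * (q ^ N)⁻¹)
  have hxN : x * q ^ N = -z := by simp [x, hq₀]
  have hlow : ∀ n ∈ range N,
      1 + x * q ^ (N - 1 - n) = x * q ^ (N - 1 - n) * (1 - q ^ (n + 1) * z⁻¹) := by
    intro n hn
    have : q ^ (N - 1 - n) * q ^ (n + 1) = q ^ N := by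
      rw [← pow_add]; congr 1; have := mem_range.1 hn; omega
    linear_combination x * z⁻¹ * this + z⁻¹ * hxN - mul_inv_cancel₀ hz
  have hhigh : ∀ n ∈ range N, 1 + x * q ^ (N + n) = 1 - q ^ n * z := fun n _ => by
    rw [pow_add]; linear_combination q ^ n * hxN
  rw [two_mul, prod_range_add, prod_congr rfl hhigh, ← prod_range_reflect, prod_congr rfl hlow,
    prod_mul_distrib, prod_range_reflect (fun j => x * q ^ j), prod_mul_distrib, prod_const,
    card_range, prod_pow_eq_pow_sum, triangular_natCast, prod_mul_distrib]
  ring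

lemma jacobiTerm_natCast_add_one (hz : z ≠ 0) (n : ℕ) :
    jacobiTerm q z (n + 1) = -(q ^ n * z) * jacobiTerm q z n := by
  rw [jacobiTerm, jacobiTerm, triangular_natCast_add_one, pow_add, zpow_add_one₀ hz,
    zpow_add_one₀ (neg_ne_zero.2 one_ne_zero)]
  ring

lemma jacobiTerm_neg_natCast_sub_one (hz : z ≠ 0) (n : ℕ) :
    jacobiTerm q z (-n - 1) = -(q ^ (n + 1) * z⁻¹) * jacobiTerm q z (-n) := by
  rw [jacobiTerm, jacobiTerm, triangular_neg_natCast_sub_one, pow_add, zpow_sub_one₀ hz,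
    zpow_sub_one₀ (neg_ne_zero.2 one_ne_zero)]
  ring

theorem prod_one_sub_mul_one_sub_eq_sum (hq₀ : q ≠ 0) (hz : z ≠ 0) (N : ℕ) :
    ∏ n ∈ range N, ((1 - q ^ (n + 1) * z⁻¹) * (1 - q ^ n * z)) =
      ∑ m ∈ Icc (-(N : ℤ)) N, jacobiTerm q z m * qBinomial q (2 * N) (N + m).toNat := by
  set x := -(z * (q ^ N)⁻¹)
  have hc : x ^ N * q ^ triangular N ≠ 0 := by simp [x, hq₀, hz]
  refine mul_left_cancel₀ hc ?_
  rw [← prod_one_add_mul_pow_eq_mul_prod hq₀ hz, prod_one_add_mul_pow_eq_sum, mul_sum]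
  symm
  refine sum_nbij' (fun m => (N + m).toNat) (fun k => (k : ℤ) - N) ?_ ?_ ?_ ?_ ?_
  · intro m hm; simp only [mem_Icc, mem_range] at hm ⊢; omega
  · intro k hk; simp only [mem_Icc, mem_range] at hk ⊢; omega
  · intro m hm; rw [mem_Icc] at hm; omega
  · intro k _; omega
  · intro m hm
    have hm : 0 ≤ (N : ℤ) + m := by rw [mem_Icc] at hm; omega
    linear_combination (-qBinomial q (2 * N) (N + m).toNat) *
      pow_triangular_mul_pow_eq_mul_jacobiTerm hq₀ hz N hm

end FiniteIdentity

section Analytic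

variable {𝕜 : Type*} [NormedField 𝕜] {q z : 𝕜}

lemma summable_of_norm_succ_le {E : Type*} [SeminormedAddCommGroup E] [CompleteSpace E]
    {f : ℕ → E} {ρ : ℕ → ℝ} (hρ : Tendsto ρ atTop (𝓝 0)) (hf : ∀ n, ‖f (n + 1)‖ ≤ ρ n * ‖f n‖) :
    Summable f := by
  refine summable_of_ratio_norm_eventually_le one_half_lt_one ?_
  filter_upwards [hρ.eventually (ge_mem_nhds one_half_pos)] with n hn
  exact (hf n).trans (mul_le_mul_of_nonneg_right hn (norm_nonneg _))

theorem summable_norm_jacobiTerm (hq : ‖q‖ < 1) (hz : z ≠ 0) :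
    Summable fun m => ‖jacobiTerm q z m‖ := by
  have hgeom (c : ℝ) : Tendsto (fun n : ℕ => ‖q‖ ^ n * c) atTop (𝓝 0) := by
    simpa using (tendsto_pow_atTop_nhds_zero_of_lt_one (norm_nonneg q) hq).mul_const c
  refine .of_nat_of_neg (summable_of_norm_succ_le (hgeom ‖z‖) fun n => ?_)
    (summable_of_norm_succ_le (hgeom (‖q‖ * ‖z‖⁻¹)) fun n => ?_)
  · rw [norm_norm, norm_norm, Nat.cast_succ, jacobiTerm_natCast_add_one hz, norm_mul, norm_neg,
      norm_mul, norm_pow]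
  · rw [norm_norm, norm_norm, Nat.cast_succ, neg_add', jacobiTerm_neg_natCast_sub_one hz,
      norm_mul, norm_neg, norm_mul, norm_pow, norm_inv, pow_succ]
    exact le_of_eq (by ring)

lemma one_sub_pow_succ_ne_zero (hq : ‖q‖ < 1) (n : ℕ) : 1 - q ^ (n + 1) ≠ 0 := by
  refine sub_ne_zero.2 fun h => ?_
  have := pow_lt_one₀ (norm_nonneg q) hq n.succ_ne_zero
  rw [← norm_pow, ← h, norm_one] at this
  exact this.false

lemma qPochhammer_ne_zero (hq : ‖q‖ < 1) (n : ℕ) : qPochhammer q n ≠ 0 :=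
  prod_ne_zero_iff.2 fun j _ => one_sub_pow_succ_ne_zero hq j

lemma jacobiWeight_of_natAbs_le (hq : ‖q‖ < 1) {N : ℕ} {m : ℤ} (hm : m.natAbs ≤ N) :
    jacobiWeight q N m = qPochhammer q N * qPochhammer q (2 * N) *
      (qPochhammer q (N + m).toNat)⁻¹ * (qPochhammer q (N - m).toNat)⁻¹ := by
  have h := qBinomial_mul_qPochhammer_mul_qPochhammer q (N + m).toNat (N - m).toNat
  rw [show (N + m).toNat + (N - m).toNat = 2 * N by omega] at h
  have := qPochhammer_ne_zero hq (N + m).toNat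
  have := qPochhammer_ne_zero hq (N - m).toNat
  rw [jacobiWeight, if_pos hm]
  field_simp
  linear_combination qPochhammer q N * h

lemma prod_range_jacobi_factor_eq_tsum (hq₀ : q ≠ 0) (hz : z ≠ 0) (N : ℕ) :
    ∏ n ∈ range N, ((1 - q ^ (n + 1)) * (1 - q ^ (n + 1) * z⁻¹) * (1 - q ^ n * z)) =
      ∑' m, jacobiTerm q z m * jacobiWeight q N m := by
  rw [tsum_eq_sum (s := Icc (-(N : ℤ)) N) fun m hm => by
      rw [jacobiWeight, if_neg (by rw [mem_Icc] at hm; omega), mul_zero]]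
  rw [prod_congr rfl fun n _ => mul_assoc _ _ _, prod_mul_distrib,
    prod_one_sub_mul_one_sub_eq_sum hq₀ hz, mul_sum]
  refine sum_congr rfl fun m hm => ?_
  rw [jacobiWeight, if_pos (by rw [mem_Icc] at hm; omega), qPochhammer]
  ring

lemma tsum_jacobiTerm_zero_eq_tprod (z : 𝕜) :
    ∑' m, jacobiTerm 0 z m =
      ∏' n : ℕ, (1 - (0 : 𝕜) ^ (n + 1)) * (1 - (0 : 𝕜) ^ (n + 1) * z⁻¹) *
        (1 - (0 : 𝕜) ^ n * z) := by
  have hterm (m : ℤ) (hm : m ∉ ({0, 1} : Finset ℤ)) : jacobiTerm 0 z m = 0 := by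
    simp only [mem_insert, mem_singleton, not_or] at hm
    simp [jacobiTerm, triangular_ne_zero hm.1 hm.2]
  have hfactor (n : ℕ) (hn : n ∉ ({0} : Finset ℕ)) :
      (1 - (0 : 𝕜) ^ (n + 1)) * (1 - (0 : 𝕜) ^ (n + 1) * z⁻¹) * (1 - (0 : 𝕜) ^ n * z) = 1 := by
    simp_all
  rw [tsum_eq_sum hterm, tprod_eq_prod hfactor, sum_pair zero_ne_one, prod_singleton]
  simp [jacobiTerm, triangular, sub_eq_add_neg]

variable [CompleteSpace 𝕜]

lemma multipliable_one_sub_pow_mul (hq : ‖q‖ < 1) (c : 𝕜) :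
    Multipliable fun n : ℕ => 1 - q ^ n * c := by
  simp_rw [sub_eq_add_neg]
  refine multipliable_one_add_of_summable ?_
  simpa [norm_pow] using (summable_geometric_of_lt_one (norm_nonneg q) hq).mul_right ‖c‖

theorem multipliable_jacobi_factor (hq : ‖q‖ < 1) (z : 𝕜) :
    Multipliable fun n : ℕ => (1 - q ^ (n + 1)) * (1 - q ^ (n + 1) * z⁻¹) * (1 - q ^ n * z) := by
  refine (((multipliable_one_sub_pow_mul hq q).mul
    (multipliable_one_sub_pow_mul hq (q * z⁻¹))).mul (multipliable_one_sub_pow_mul hq z)).congr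
    fun n => by ring

lemma tendsto_qPochhammer (hq : ‖q‖ < 1) :
    Tendsto (qPochhammer q) atTop (𝓝 (∏' n : ℕ, (1 - q ^ (n + 1)))) :=
  ((multipliable_one_sub_pow_mul hq q).congr (g := fun n => 1 - q ^ (n + 1))
    fun n => by ring).hasProd.tendsto_prod_nat

lemma tprod_one_sub_pow_succ_ne_zero (hq : ‖q‖ < 1) : ∏' n : ℕ, (1 - q ^ (n + 1)) ≠ 0 := by
  simp_rw [sub_eq_add_neg]
  refine tprod_one_add_ne_zero_of_summable (fun n => ?_) ?_
  · simpa [← sub_eq_add_neg] using one_sub_pow_succ_ne_zero hq n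
  · simpa [pow_succ] using (summable_geometric_of_lt_one (norm_nonneg q) hq).mul_right ‖q‖

/-- `(q; q)_n` converges to a nonzero limit, so it is bounded above and away from zero. -/
lemma exists_norm_qPochhammer_le (hq : ‖q‖ < 1) :
    ∃ C, ∀ n, ‖qPochhammer q n‖ ≤ C ∧ ‖(qPochhammer q n)⁻¹‖ ≤ C := by
  have h := tendsto_qPochhammer hq
  obtain ⟨C₁, hC₁⟩ := isBounded_iff_forall_norm_le.1 (Metric.isBounded_range_of_tendsto _ h)
  obtain ⟨C₂, hC₂⟩ := isBounded_iff_forall_norm_le.1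
    (Metric.isBounded_range_of_tendsto _ (h.inv₀ (tprod_one_sub_pow_succ_ne_zero hq)))
  exact ⟨max C₁ C₂, fun n => ⟨(hC₁ _ ⟨n, rfl⟩).trans (le_max_left _ _),
    (hC₂ _ ⟨n, rfl⟩).trans (le_max_right _ _)⟩⟩

lemma exists_norm_jacobiWeight_le (hq : ‖q‖ < 1) : ∃ C, ∀ N m, ‖jacobiWeight q N m‖ ≤ C := by
  obtain ⟨C, hC⟩ := exists_norm_qPochhammer_le hq
  refine ⟨C ^ 4, fun N m => ?_⟩
  have hC0 : 0 ≤ C := (norm_nonneg _).trans (hC 0).1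
  by_cases hm : m.natAbs ≤ N
  · rw [jacobiWeight_of_natAbs_le hq hm, norm_mul, norm_mul, norm_mul, pow_succ, pow_succ,
      pow_succ, pow_one]
    gcongr
    exacts [(hC _).1, (hC _).1, (hC _).2, (hC _).2]
  · simpa [jacobiWeight, hm] using pow_nonneg hC0 4

lemma tendsto_jacobiWeight (hq : ‖q‖ < 1) (m : ℤ) :
    Tendsto (fun N => jacobiWeight q N m) atTop (𝓝 1) := by
  set L := ∏' n : ℕ, (1 - q ^ (n + 1))
  have hL : L ≠ 0 := tprod_one_sub_pow_succ_ne_zero hq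
  have hΦ := tendsto_qPochhammer hq
  have h₁ : Tendsto (fun N : ℕ => 2 * N) atTop atTop :=
    tendsto_atTop_atTop.2 fun b => ⟨b, fun N hN => by omega⟩
  have h₂ : Tendsto (fun N : ℕ => ((N : ℤ) + m).toNat) atTop atTop :=
    tendsto_atTop_atTop.2 fun b => ⟨b + m.natAbs, fun N hN => by omega⟩
  have h₃ : Tendsto (fun N : ℕ => ((N : ℤ) - m).toNat) atTop atTop :=
    tendsto_atTop_atTop.2 fun b => ⟨b + m.natAbs, fun N hN => by omega⟩
  have hlim := ((hΦ.mul (hΦ.comp h₁)).mul ((hΦ.comp h₂).inv₀ hL)).mul ((hΦ.comp h₃).inv₀ hL)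
  rw [show L * L * L⁻¹ * L⁻¹ = 1 by field_simp] at hlim
  refine hlim.congr' ?_
  filter_upwards [eventually_ge_atTop m.natAbs] with N hN
  rw [jacobiWeight_of_natAbs_le hq hN]
  rfl

theorem tendsto_prod_range_jacobi_factor (hq : ‖q‖ < 1) (hq₀ : q ≠ 0) (hz : z ≠ 0) :
    Tendsto (fun N => ∏ n ∈ range N,
        ((1 - q ^ (n + 1)) * (1 - q ^ (n + 1) * z⁻¹) * (1 - q ^ n * z)))
      atTop (𝓝 (∑' m, jacobiTerm q z m)) := by
  obtain ⟨C, hC⟩ := exists_norm_jacobiWeight_le hq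
  simp_rw [prod_range_jacobi_factor_eq_tsum hq₀ hz]
  refine tendsto_tsum_of_dominated_convergence ((summable_norm_jacobiTerm hq hz).mul_right C)
    (fun m => by simpa using (tendsto_jacobiWeight hq m).const_mul (jacobiTerm q z m))
    (.of_forall fun N m => ?_)
  rw [norm_mul]
  exact mul_le_mul_of_nonneg_left (hC N m) (norm_nonneg _)

end Analytic

/-- **Jacobi's triple product identity, analytic form.**
For complex numbers `q`, `z` with `|q| < 1` and `z ≠ 0`, the doubly infinite series
`∑_{m ∈ ℤ} (-1)^m q^(m(m-1)/2) z^m` converges absolutely, the infinite product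
`∏_{n=1}^∞ (1 - q^n)(1 - q^n z⁻¹)(1 - q^(n-1) z)` converges (absolutely, in the sense
of multipliability), and the sum equals the product.  Here `m * (m - 1) / 2` is a
nonnegative integer for every `m : ℤ`, so `q ^ (m * (m - 1) / 2).toNat` is the
usual nonnegative integer power. -/
theorem jacobi_triple_product_analytic (q z : ℂ) (hq : ‖q‖ < 1) (hz : z ≠ 0) :
    Summable (fun m : ℤ => ‖(-1) ^ m * q ^ (m * (m - 1) / 2).toNat * z ^ m‖) ∧
    Multipliable (fun n : ℕ => (1 - q ^ (n + 1)) * (1 - q ^ (n + 1) * z⁻¹) * (1 - q ^ n * z)) ∧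
    ∑' m : ℤ, (-1) ^ m * q ^ (m * (m - 1) / 2).toNat * z ^ m =
      ∏' n : ℕ, (1 - q ^ (n + 1)) * (1 - q ^ (n + 1) * z⁻¹) * (1 - q ^ n * z) := by
  refine ⟨summable_norm_jacobiTerm hq hz, multipliable_jacobi_factor hq z, ?_⟩
  rcases eq_or_ne q 0 with rfl | hq₀
  · exact tsum_jacobiTerm_zero_eq_tprod z
  · exact tendsto_nhds_unique (tendsto_prod_range_jacobi_factor hq hq₀ hz)
      (multipliable_jacobi_factor hq z).hasProd.tendsto_prod_nat
end

section
/- Euler's pentagonal number theorem: in the formal power series ring ℤ[[q]], ∏_{n=1}^{∞} (1 - q^n) = ∑_{m ∈ ℤ} (-1)^m q^{m(3m-1)/2}, i.e. for every nonnegative integer N the coefficient of q^N in ∏_{n=1}^{∞}(1 - q^n) equals ∑ (-1)^m over those integers m with m(3m-1)/2 = N. -/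
/-!
Mathlib's `PowerSeries.coeff_prod_one_sub_X_pow_eventually_eq` says that the coefficients of the
partial products of `∏ (1 - X ^ (n + 1))` are eventually those of `pentagonalSeries`. The
coefficient of `X ^ N` is already stable once `N` factors are taken, because every further factor
is `1` modulo `X ^ (N + 1)`. The coefficient of `X ^ N` in `pentagonalSeries` is the stated sum
over `[-N, N]`, since `pentagonal` is injective and `|m| ≤ pentagonal m`.
-/

open Filter Finset PowerSeries

section PartialProducts

variable {R : Type*} [CommRing R]

theorem coeff_mul_one_sub_X_pow_of_lt (p : R⟦X⟧) {N k : ℕ} (h : N < k) :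
    coeff N (p * (1 - X ^ k)) = coeff N p := by
  rw [mul_sub, mul_one, map_sub, coeff_mul_X_pow', if_neg (by omega), sub_zero]

theorem coeff_prod_range_one_sub_X_pow_of_le {N M M' : ℕ} (hM : N ≤ M) (hM' : M ≤ M') :
    coeff N (∏ n ∈ range M', (1 - X ^ (n + 1) : R⟦X⟧)) =
      coeff N (∏ n ∈ range M, (1 - X ^ (n + 1) : R⟦X⟧)) := by
  induction M', hM' using Nat.le_induction with
  | base => rfl
  | succ K hK ih => rw [prod_range_succ, coeff_mul_one_sub_X_pow_of_lt _ (by omega), ih]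

variable (R) in
theorem coeff_prod_range_one_sub_X_pow_eq_coeff_pentagonalSeries {N M : ℕ} (hM : N ≤ M) :
    coeff N (∏ n ∈ range M, (1 - X ^ (n + 1) : R⟦X⟧)) = coeff N (pentagonalSeries R) := by
  obtain ⟨M', hlimit, hM'⟩ := ((tendsto_finset_range.eventually
    (coeff_prod_one_sub_X_pow_eventually_eq R N)).and (eventually_ge_atTop M)).exists
  rw [← hlimit, coeff_prod_range_one_sub_X_pow_of_le hM hM']

end PartialProducts

theorem natAbs_le_pentagonal (k : ℤ) : k.natAbs ≤ pentagonal k := by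
  have h := two_mul_natCast_pentagonal k
  zify
  rcases abs_cases k with ⟨hk, -⟩ | ⟨hk, -⟩ <;> rw [hk] <;> nlinarith

theorem coeff_pentagonalSeries_eq_sum_Icc (R : Type*) [CommRing R] (N : ℕ) :
    coeff N (pentagonalSeries R) = ∑ m ∈ Icc (-(N : ℤ)) N,
      if m * (3 * m - 1) / 2 = N then (-1 : R) ^ m.natAbs else 0 := by
  simp_rw [← natCast_pentagonal, Nat.cast_inj]
  by_cases hN : N ∈ Set.range pentagonal
  · obtain ⟨k, rfl⟩ := hN
    have hk := natAbs_le_pentagonal k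
    simp_rw [pentagonal_inj, sum_ite_eq', mem_Icc, coeff_pentagonalSeries_pentagonal]
    rw [if_pos (by omega), Int.coe_negOnePow]
  · rw [coeff_pentagonalSeries_eq_zero R hN, eq_comm]
    exact sum_eq_zero fun m _ ↦ if_neg fun h ↦ hN ⟨m, h⟩

/-- **Euler's pentagonal number theorem** in `ℤ[[q]]`:
`∏_{n=1}^∞ (1 - q^n) = ∑_{m ∈ ℤ} (-1)^m q^(m(3m-1)/2)`.

The infinite product converges in the `(q)`-adic topology: the `n`-th factor is
`1 + O(q^n)`, so the coefficient of `q^N` in the partial products stabilizes once at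
least `N` factors are taken.  Hence the identity says: for every `N` and every `M ≥ N`,
the coefficient of `q^N` in `∏_{n=1}^M (1 - q^n)` equals `∑ (-1)^m` over those
(finitely many, at most two) integers `m` with `m(3m-1)/2 = N`; all such `m` satisfy
`-N ≤ m ≤ N`. -/
theorem euler_pentagonal_number_theorem (N M : ℕ) (hM : N ≤ M) :
    (PowerSeries.coeff (R := ℤ) N)
      (∏ n ∈ Finset.range M, (1 - (PowerSeries.monomial (R := ℤ) (n + 1)) 1)) =
    ∑ m ∈ Finset.Icc (-(N : ℤ)) (N : ℤ),
      if m * (3 * m - 1) / 2 = N then (-1) ^ m.natAbs else 0 := by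
  simp_rw [← X_pow_eq]
  rw [coeff_prod_range_one_sub_X_pow_eq_coeff_pentagonalSeries ℤ hM,
    coeff_pentagonalSeries_eq_sum_Icc]
end

section
/- Jacobi's identity for the cube of the Euler product (the Macdonald identity for the affine root system of type A_1, giving the power series expansion of η^3): in the formal power series ring ℤ[[q]], ∏_{n=1}^{∞} (1 - q^n)^3 = ∑_{m=0}^{∞} (-1)^m (2m+1) q^{m(m+1)/2}. -/
/-!
The `q`-binomial theorem expands the finite triple product
`∏_{j=1}^{M} (1 - q^j y⁻¹) ∏_{j=0}^{M} (1 - q^j y)` as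
`∑_{k=0}^{2M+1} (-1)^(k-M) [2M+1, k]_q q^(e_k) y^(k-M)`, where `e_{M-m} = e_{M+1+m} = m(m+1)/2`.
The product vanishes at `y = 1`; differentiating there and pairing the terms `k = M - m` and
`k = M + 1 + m`, whose Gaussian binomials agree, gives the finite Jacobi identity
`(q;q)_M² = ∑_{m ≤ M} (-1)^m (2m+1) q^(m(m+1)/2) [2M+1, M-m]_q`.
Since `(q;q)_M [a+b, a]_q ≡ 1 mod q^(n+1)` whenever `n ≤ a, b, M`, multiplying by `(q;q)_M` and
reading off the coefficient of `q^N` with `N ≤ M` leaves exactly the terms with `m(m+1)/2 = N`.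
-/

open Finset

theorem Finset.sum_range_two_mul_add_two {M : Type*} [AddCommMonoid M] (f : ℕ → M) (n : ℕ) :
    ∑ k ∈ range (2 * n + 2), f k = ∑ m ∈ range (n + 1), (f (n - m) + f (n + 1 + m)) := by
  rw [show 2 * n + 2 = n + 1 + (n + 1) by ring, sum_range_add, ← sum_range_reflect f (n + 1),
    ← sum_add_distrib]
  simp

theorem Nat.choose_two_sub_add_mul_add {M m : ℕ} (hm : m ≤ M) :
    (M - m).choose 2 + M * (M + 1 + m) = M.choose 2 + M * (M + 1) + (m + 1).choose 2 := by
  obtain ⟨r, rfl⟩ := Nat.exists_eq_add_of_le hm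
  rw [Nat.add_sub_cancel_left]
  qify [Nat.cast_choose_two]
  ring

theorem Nat.choose_two_add_add_mul_sub {M m : ℕ} (hm : m ≤ M) :
    (M + 1 + m).choose 2 + M * (M - m) = M.choose 2 + M * (M + 1) + (m + 1).choose 2 := by
  obtain ⟨r, rfl⟩ := Nat.exists_eq_add_of_le hm
  rw [Nat.add_sub_cancel_left]
  qify [Nat.cast_choose_two]
  ring

theorem Polynomial.eval_derivative_mul_mul_of_isRoot {S : Type*} [CommSemiring S]
    {p q r : Polynomial S} {a : S} (h : q.IsRoot a) :
    (derivative (p * q * r)).eval a = p.eval a * (derivative q).eval a * r.eval a := by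
  simp only [derivative_mul, eval_add, eval_mul, h.eq_zero]
  ring

namespace PowerSeries

variable {R : Type*} [CommRing R]

variable (R) in
noncomputable def qPochhammer (n : ℕ) : R⟦X⟧ := ∏ i ∈ range n, (1 - X ^ (i + 1))

variable (R) in
noncomputable def qBinomial : ℕ → ℕ → R⟦X⟧
  | _, 0 => 1
  | 0, _ + 1 => 0
  | n + 1, k + 1 => qBinomial n k + X ^ (k + 1) * qBinomial n (k + 1)

theorem qPochhammer_succ (n : ℕ) :
    qPochhammer R (n + 1) = qPochhammer R n * (1 - X ^ (n + 1)) :=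
  prod_range_succ _ _

theorem isUnit_qPochhammer (n : ℕ) : IsUnit (qPochhammer R n) := by
  simp [isUnit_iff_constantCoeff, qPochhammer]

theorem X_pow_dvd_qPochhammer_sub {n M : ℕ} (h : n ≤ M) :
    (X : R⟦X⟧) ^ (n + 1) ∣ qPochhammer R M - qPochhammer R n := by
  induction M, h using Nat.le_induction with
  | base => simp
  | succ M hnM ih =>
    rw [qPochhammer_succ, show qPochhammer R M * (1 - X ^ (M + 1)) - qPochhammer R n =
      qPochhammer R M - qPochhammer R n - X ^ (M + 1) * qPochhammer R M by ring]
    exact dvd_sub ih (dvd_mul_of_dvd_left (pow_dvd_pow _ (by omega)) _)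

theorem X_pow_dvd_qPochhammer_sub_qPochhammer {n M M' : ℕ} (h : n ≤ M) (h' : n ≤ M') :
    (X : R⟦X⟧) ^ (n + 1) ∣ qPochhammer R M - qPochhammer R M' := by
  simpa using dvd_sub (X_pow_dvd_qPochhammer_sub h) (X_pow_dvd_qPochhammer_sub h')

@[simp] theorem qBinomial_zero_right (n : ℕ) : qBinomial R n 0 = 1 := by
  cases n <;> rfl

theorem qBinomial_succ_succ (n k : ℕ) :
    qBinomial R (n + 1) (k + 1) = qBinomial R n k + X ^ (k + 1) * qBinomial R n (k + 1) := rfl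

theorem qBinomial_eq_zero_of_lt {n k : ℕ} (h : n < k) : qBinomial R n k = 0 := by
  induction n generalizing k with
  | zero => obtain ⟨k, rfl⟩ := Nat.exists_eq_add_of_lt h; rfl
  | succ n ih =>
    obtain ⟨k, rfl⟩ := Nat.exists_eq_add_of_lt (Nat.zero_lt_of_lt h)
    rw [zero_add, qBinomial_succ_succ, ih (by omega), ih (by omega), mul_zero, add_zero]

@[simp] theorem qBinomial_self (n : ℕ) : qBinomial R n n = 1 := by
  induction n with
  | zero => rfl
  | succ n ih =>
    rw [qBinomial_succ_succ, ih, qBinomial_eq_zero_of_lt n.lt_succ_self, mul_zero, add_zero]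

theorem qBinomial_add_mul_qPochhammer_mul_qPochhammer (a b : ℕ) :
    qBinomial R (a + b) a * qPochhammer R a * qPochhammer R b = qPochhammer R (a + b) := by
  induction a generalizing b with
  | zero => simp [qPochhammer]
  | succ a iha =>
    induction b with
    | zero => simp [qPochhammer]
    | succ b ihb =>
      have h := iha (b + 1)
      rw [← add_assoc, qPochhammer_succ b] at h
      rw [show a + 1 + b = a + b + 1 by omega, qPochhammer_succ a] at ihb
      rw [show a + 1 + (b + 1) = a + b + 1 + 1 by omega, qBinomial_succ_succ,
        qPochhammer_succ (a + b + 1), qPochhammer_succ a, qPochhammer_succ b]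
      linear_combination (1 - X ^ (a + 1)) * h + X ^ (a + 1) * (1 - X ^ (b + 1)) * ihb

theorem qBinomial_add_comm (a b : ℕ) : qBinomial R (a + b) a = qBinomial R (a + b) b := by
  have h := qBinomial_add_mul_qPochhammer_mul_qPochhammer (R := R) b a
  rw [add_comm b a] at h
  apply ((isUnit_qPochhammer a).mul (isUnit_qPochhammer b)).mul_right_cancel
  linear_combination qBinomial_add_mul_qPochhammer_mul_qPochhammer (R := R) a b - h

theorem X_pow_dvd_qPochhammer_mul_qBinomial_sub_one {n L a b : ℕ} (hL : n ≤ L) (ha : n ≤ a)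
    (hb : n ≤ b) : (X : R⟦X⟧) ^ (n + 1) ∣ qPochhammer R L * qBinomial R (a + b) a - 1 := by
  rw [← ((isUnit_qPochhammer a).mul (isUnit_qPochhammer b)).dvd_mul_left]
  have h : qPochhammer R a * qPochhammer R b * (qPochhammer R L * qBinomial R (a + b) a - 1) =
      (qPochhammer R L - qPochhammer R a) * qPochhammer R (a + b) +
        qPochhammer R a * (qPochhammer R (a + b) - qPochhammer R b) := by
    linear_combination qPochhammer R L * qBinomial_add_mul_qPochhammer_mul_qPochhammer (R := R) a b
  rw [h]
  exact dvd_add (dvd_mul_of_dvd_left (X_pow_dvd_qPochhammer_sub_qPochhammer hL ha) _)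
    (dvd_mul_of_dvd_right (X_pow_dvd_qPochhammer_sub_qPochhammer (by omega) hb) _)

theorem coeff_X_pow_mul_of_X_pow_dvd_sub_one {d N : ℕ} {f : R⟦X⟧} (hf : X ^ (N - d + 1) ∣ f - 1) :
    coeff N (X ^ d * f) = if d = N then 1 else 0 := by
  rw [coeff_X_pow_mul']
  split_ifs
  · have := (X_pow_dvd_iff.mp hf) (N - d) (by omega)
    rwa [map_sub, coeff_one, if_pos (by omega), sub_eq_zero] at this
  · have := (X_pow_dvd_iff.mp hf) (N - d) (by omega)
    rwa [map_sub, coeff_one, if_neg (by omega), sub_zero] at this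
  · omega
  · rfl

theorem prod_range_add_X_pow_mul {S : Type*} [CommRing S] [Algebra R⟦X⟧ S] (n : ℕ) (x y : S) :
    ∏ i ∈ range n, (x + algebraMap R⟦X⟧ S (X ^ i) * y) =
      ∑ k ∈ range (n + 1),
        algebraMap R⟦X⟧ S (X ^ k.choose 2 * qBinomial R n k) * y ^ k * x ^ (n - k) := by
  induction n generalizing y with
  | zero => simp
  | succ n ih =>
    let c (n k : ℕ) : R⟦X⟧ := X ^ k.choose 2 * qBinomial R n k
    have hc_succ (k : ℕ) : c (n + 1) (k + 1) = X ^ k * c n k + X ^ (k + 1) * c n (k + 1) := by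
      simp only [c, qBinomial_succ_succ, Nat.choose_succ_succ', Nat.choose_one_right]
      ring
    have hshift :
        ∑ k ∈ range (n + 1), algebraMap R⟦X⟧ S (X ^ k * c n k) * y ^ k * x ^ (n + 1 - k) =
          ∑ k ∈ range (n + 1),
            algebraMap R⟦X⟧ S (X ^ (k + 1) * c n (k + 1)) * y ^ (k + 1) * x ^ (n - k) +
          x ^ (n + 1) := by
      have hlast : c n (n + 1) = 0 := by simp [c, qBinomial_eq_zero_of_lt]
      have hext :
          ∑ k ∈ range (n + 1), algebraMap R⟦X⟧ S (X ^ k * c n k) * y ^ k * x ^ (n + 1 - k) =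
            ∑ k ∈ range (n + 1 + 1),
              algebraMap R⟦X⟧ S (X ^ k * c n k) * y ^ k * x ^ (n + 1 - k) := by
        rw [sum_range_succ _ (n + 1), hlast]
        simp
      rw [hext, sum_range_succ']
      simp [c]
    calc ∏ i ∈ range (n + 1), (x + algebraMap R⟦X⟧ S (X ^ i) * y)
        = (∑ k ∈ range (n + 1), algebraMap R⟦X⟧ S (c n k) * (algebraMap R⟦X⟧ S X * y) ^ k *
            x ^ (n - k)) * (x + y) := by
          rw [prod_range_succ', ← ih]
          simp only [pow_succ, map_mul, pow_zero, map_one, one_mul, mul_assoc]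
      _ = ∑ k ∈ range (n + 1), algebraMap R⟦X⟧ S (X ^ k * c n k) * y ^ k * x ^ (n + 1 - k) +
          ∑ k ∈ range (n + 1), algebraMap R⟦X⟧ S (X ^ k * c n k) * y ^ (k + 1) * x ^ (n - k) := by
          rw [sum_mul, ← sum_add_distrib]
          refine sum_congr rfl fun k hk ↦ ?_
          rw [show n + 1 - k = n - k + 1 by have := mem_range.mp hk; omega]
          simp only [map_mul, map_pow, mul_pow, pow_succ]
          ring
      _ = ∑ k ∈ range (n + 1 + 1), algebraMap R⟦X⟧ S (c (n + 1) k) * y ^ k * x ^ (n + 1 - k) := by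
          rw [hshift, sum_range_succ' _ (n + 1)]
          simp only [hc_succ, map_add, add_mul, sum_add_distrib, Nat.add_sub_add_right]
          simp only [c, map_mul, map_pow, Nat.choose_zero_succ, pow_zero, qBinomial_zero_right,
            mul_one, map_one, tsub_zero, one_mul]
          ring

theorem prod_range_X_pow_sub_X_pow (M : ℕ) :
    ∏ i ∈ range M, ((X : R⟦X⟧) ^ M - X ^ i) = (-1) ^ M * X ^ M.choose 2 * qPochhammer R M := by
  rw [← prod_range_reflect]
  have h (i : ℕ) (hi : i ∈ range M) :
      (X : R⟦X⟧) ^ M - X ^ (M - 1 - i) = -1 * X ^ (M - 1 - i) * (1 - X ^ (i + 1)) := by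
    rw [show M = M - 1 - i + (i + 1) by have := mem_range.mp hi; omega, pow_add,
      show M - 1 - i + (i + 1) - 1 - i = M - 1 - i by omega]
    ring
  rw [prod_congr rfl h, prod_mul_distrib, prod_mul_distrib, prod_const, card_range,
    prod_pow_eq_pow_sum, sum_range_reflect (fun i ↦ i) M, sum_range_id, ← Nat.choose_two_right,
    qPochhammer]

theorem prod_range_X_pow_sub_X_pow_add (M : ℕ) :
    ∏ j ∈ range M, ((X : R⟦X⟧) ^ M - X ^ (M + 1 + j)) = X ^ (M * M) * qPochhammer R M := by
  have h : (X : R⟦X⟧) ^ (M * M) = ∏ _j ∈ range M, X ^ M := by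
    rw [prod_const, card_range, ← pow_mul]
  rw [qPochhammer, h, ← prod_mul_distrib]
  exact prod_congr rfl fun j _ ↦ by ring

/-- Up to the factor `(-y)^M q^(M(M+1) + M(M-1)/2)`, this is the finite triple product
`∏_{j=1}^{M} (1 - q^j y⁻¹) ∏_{j=0}^{M} (1 - q^j y)`, cleared of negative powers of `y`. -/
noncomputable def finiteTripleProduct (M : ℕ) : Polynomial R⟦X⟧ :=
  ∏ i ∈ range (2 * M + 1), (Polynomial.C (X ^ M) - Polynomial.C (X ^ i) * Polynomial.X)

theorem finiteTripleProduct_eq_sum (M : ℕ) :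
    finiteTripleProduct (R := R) M = ∑ k ∈ range (2 * M + 2),
      Polynomial.C ((-1) ^ k * X ^ (k.choose 2 + M * (2 * M + 1 - k)) * qBinomial R (2 * M + 1) k) *
        Polynomial.X ^ k := by
  have h := prod_range_add_X_pow_mul (R := R) (2 * M + 1) (Polynomial.C (X ^ M))
    (-Polynomial.X : Polynomial R⟦X⟧)
  simp only [Polynomial.algebraMap_eq] at h
  rw [finiteTripleProduct]
  convert h using 1
  · exact prod_congr rfl fun i _ ↦ by ring
  · refine sum_congr rfl fun k _ ↦ ?_
    rw [neg_pow (Polynomial.X : Polynomial R⟦X⟧)]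
    simp only [map_mul, map_pow, map_neg, map_one, pow_add, pow_mul]
    ring

theorem eval_one_derivative_finiteTripleProduct (M : ℕ) :
    (Polynomial.derivative (finiteTripleProduct (R := R) M)).eval 1 =
      -((-1) ^ M * X ^ (M.choose 2 + M * (M + 1)) * qPochhammer R M ^ 2) := by
  rw [finiteTripleProduct, show 2 * M + 1 = M + 1 + M by ring, prod_range_add, prod_range_succ,
    Polynomial.eval_derivative_mul_mul_of_isRoot (by simp)]
  simp only [Polynomial.eval_prod, Polynomial.eval_sub, Polynomial.eval_C, Polynomial.eval_mul,
    Polynomial.eval_X, mul_one, Polynomial.derivative_sub, Polynomial.derivative_C,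
    Polynomial.derivative_C_mul_X, zero_sub, Polynomial.eval_neg]
  rw [prod_range_X_pow_sub_X_pow, prod_range_X_pow_sub_X_pow_add]
  ring

theorem qPochhammer_sq_eq_sum (M : ℕ) :
    qPochhammer R M ^ 2 = ∑ m ∈ range (M + 1),
      (-1) ^ m * (2 * (m : R⟦X⟧) + 1) * X ^ (m + 1).choose 2 * qBinomial R (2 * M + 1) (M - m) := by
  have h := eval_one_derivative_finiteTripleProduct (R := R) M
  rw [finiteTripleProduct_eq_sum] at h
  simp only [Polynomial.derivative_sum, Polynomial.eval_finsetSum,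
    Polynomial.derivative_C_mul_X_pow, Polynomial.eval_mul, Polynomial.eval_C,
    Polynomial.eval_pow, Polynomial.eval_X, one_pow, mul_one] at h
  rw [sum_range_two_mul_add_two] at h
  have hpair (m : ℕ) (hm : m ∈ range (M + 1)) :
      (-1) ^ (M - m) * X ^ ((M - m).choose 2 + M * (2 * M + 1 - (M - m))) *
          qBinomial R (2 * M + 1) (M - m) * ((M - m : ℕ) : R⟦X⟧) +
        (-1) ^ (M + 1 + m) * X ^ ((M + 1 + m).choose 2 + M * (2 * M + 1 - (M + 1 + m))) *
          qBinomial R (2 * M + 1) (M + 1 + m) * ((M + 1 + m : ℕ) : R⟦X⟧) =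
      -((-1) ^ M * X ^ (M.choose 2 + M * (M + 1))) * ((-1) ^ m * (2 * (m : R⟦X⟧) + 1) *
        X ^ (m + 1).choose 2 * qBinomial R (2 * M + 1) (M - m)) := by
    have hmM : m ≤ M := Nat.lt_succ_iff.mp (mem_range.mp hm)
    have hsign : (-1 : R⟦X⟧) ^ (M - m) = (-1) ^ M * (-1) ^ m := by
      rw [← pow_add]
      simp [show M + m = M - m + 2 * m by omega, pow_add]
    have hsymm : qBinomial R (2 * M + 1) (M + 1 + m) = qBinomial R (2 * M + 1) (M - m) := by
      rw [show 2 * M + 1 = M + 1 + m + (M - m) by omega, qBinomial_add_comm]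
    rw [show 2 * M + 1 - (M - m) = M + 1 + m by omega,
      show 2 * M + 1 - (M + 1 + m) = M - m by omega, Nat.choose_two_sub_add_mul_add hmM,
      Nat.choose_two_add_add_mul_sub hmM, hsign, hsymm]
    push_cast [Nat.cast_sub hmM]
    ring
  rw [sum_congr rfl hpair, ← mul_sum] at h
  apply X_pow_mul_cancel (k := M.choose 2 + M * (M + 1))
  apply (isUnit_neg_one.pow M).neg.mul_left_cancel
  linear_combination -h

theorem coeff_qPochhammer_pow_three {N M : ℕ} (hNM : N ≤ M) :
    coeff N (qPochhammer R M ^ 3) =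
      ∑ m ∈ range (N + 1), if (m + 1).choose 2 = N then (-1) ^ m * (2 * (m : R) + 1) else 0 := by
  have hm_le (m : ℕ) : m ≤ (m + 1).choose 2 := by
    rw [Nat.choose_succ_succ', Nat.choose_one_right]
    omega
  have hterm (m : ℕ) (hm : m ∈ range (M + 1)) :
      coeff N (qPochhammer R M * ((-1) ^ m * (2 * (m : R⟦X⟧) + 1) * X ^ (m + 1).choose 2 *
        qBinomial R (2 * M + 1) (M - m))) =
      if (m + 1).choose 2 = N then (-1) ^ m * (2 * (m : R) + 1) else 0 := by
    have hmM : m ≤ M := Nat.lt_succ_iff.mp (mem_range.mp hm)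
    have := hm_le m
    have hdvd : X ^ (N - (m + 1).choose 2 + 1) ∣
        qPochhammer R M * qBinomial R (2 * M + 1) (M - m) - 1 := by
      rw [show 2 * M + 1 = M - m + (M + 1 + m) by omega]
      exact X_pow_dvd_qPochhammer_mul_qBinomial_sub_one (by omega) (by omega) (by omega)
    have h : qPochhammer R M * ((-1) ^ m * (2 * (m : R⟦X⟧) + 1) * X ^ (m + 1).choose 2 *
          qBinomial R (2 * M + 1) (M - m)) =
        C ((-1) ^ m * (2 * (m : R) + 1)) *
          (X ^ (m + 1).choose 2 * (qPochhammer R M * qBinomial R (2 * M + 1) (M - m))) := by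
      simp only [map_mul, map_pow, map_neg, map_one, map_add, map_natCast, map_ofNat]
      ring
    rw [h, coeff_C_mul, coeff_X_pow_mul_of_X_pow_dvd_sub_one hdvd, mul_ite, mul_one, mul_zero]
  rw [pow_succ', qPochhammer_sq_eq_sum, mul_sum, map_sum, sum_congr rfl hterm]
  refine (sum_subset (range_subset_range.mpr (by omega)) fun m _ hm ↦ ?_).symm
  have := hm_le m
  rw [if_neg (by rw [mem_range] at hm; omega)]

end PowerSeries

/-- **Jacobi's identity for the cube of the Euler product** (the Macdonald identity for
the affine root system of type `A₁`, the expansion of `η³`): in `ℤ[[q]]`,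
`∏_{n=1}^∞ (1 - q^n)³ = ∑_{m=0}^∞ (-1)^m (2m+1) q^(m(m+1)/2)`.

The infinite product converges in the `(q)`-adic topology: the `n`-th factor is
`1 + O(q^n)`, so the coefficient of `q^N` in the partial products stabilizes once at
least `N` factors are taken.  Hence the identity says: for every `N` and every `M ≥ N`,
the coefficient of `q^N` in `∏_{n=1}^M (1 - q^n)³` equals `(-1)^m (2m+1)` summed over
the (at most one, since triangular numbers are pairwise distinct) natural numbers `m`
with `m(m+1)/2 = N`; any such `m` satisfies `m ≤ N`. -/
theorem jacobi_cube_euler_product (N M : ℕ) (hM : N ≤ M) :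
    (PowerSeries.coeff (R := ℤ) N)
      (∏ n ∈ Finset.range M, (1 - (PowerSeries.monomial (R := ℤ) (n + 1)) 1) ^ 3) =
    ∑ m ∈ Finset.range (N + 1),
      if m * (m + 1) / 2 = N then (-1) ^ m * (2 * (m : ℤ) + 1) else 0 := by
  have hprod : ∏ n ∈ Finset.range M, (1 - (PowerSeries.monomial (R := ℤ) (n + 1)) 1) =
      PowerSeries.qPochhammer ℤ M := by
    simp [PowerSeries.qPochhammer, PowerSeries.X_pow_eq]
  rw [Finset.prod_pow, hprod, PowerSeries.coeff_qPochhammer_pow_three hM]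
  refine Finset.sum_congr rfl fun m _ ↦ ?_
  rw [Nat.choose_two_right, Nat.add_sub_cancel, mul_comm]
end

section
/- Dyson's constant term identity (the Macdonald constant term conjecture for the root system of type A_{n-1}): for all positive integers n and all nonnegative integers k, the constant term (the coefficient of the monomial x_1^0 ⋯ x_n^0) of the Laurent polynomial ∏_{1 ≤ i < j ≤ n} (1 - x_i x_j^{-1})^k (1 - x_j x_i^{-1})^k in the ring of Laurent polynomials in n variables over ℚ equals (nk)! / (k!)^n. -/
/-!
Good's proof. For a finite set `S` of indices and exponents `a`, the constant term of
`D_S(a) = ∏_{i ≠ l ∈ S} (1 - x_i / x_l) ^ a_i` is the multinomial coefficient `(∑ a_i)! / ∏ a_i!`;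
Dyson's identity is the case `S = {1, …, n}`, `a ≡ k`.

If `a_j = 0`, the factors of `D_S(a)` involving `x_j` are `∏_{i ≠ j} (1 - x_i / x_j) ^ a_i`, which
is `1` plus terms of negative degree in `x_j`, while `D_{S \ j}(a)` does not involve `x_j`; hence
`D_S(a)` and `D_{S \ j}(a)` have the same constant term. If all `a_i ≥ 1`, Lagrange interpolation
of the constant polynomial `1` at the nodes `x_i` gives `∑_j ∏_{l ≠ j} (1 - x_j / x_l)⁻¹ = 1`,
that is, `D_S(a) = ∑_j D_S(a - e_j)`: the recursion satisfied by multinomial coefficients.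
-/

open AddMonoidAlgebra Finset
open scoped Pointwise

namespace AddMonoidAlgebra

variable {R M : Type*} [CommSemiring R]

lemma mul_mem_supported [AddMonoid M] {s t : Set M} {f g : R[M]} (hf : f ∈ supported R R s)
    (hg : g ∈ supported R R t) : f * g ∈ supported R R (s + t) := by
  classical
  rw [mem_supported] at *
  grw [support_coeff_mul_subset, Finset.coe_add, hf, hg]

noncomputable def supportedSubalgebra [AddMonoid M] (P : AddSubmonoid M) : Subalgebra R R[M] :=
  (supported R R P).toSubalgebra
    (by grw [mem_supported, one_def, coeff_single, Finsupp.support_single_subset]; simp)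
    (fun _ _ hf hg ↦ supported_mono (AddSubmonoid.add_subset le_rfl le_rfl)
      (mul_mem_supported hf hg))

lemma map_single_one_ne_zero [AddGroup M] {F : Type*} [Semiring F] [Nontrivial F]
    (φ : R[M] →+* F) (v : M) : φ (single v 1) ≠ 0 := by
  refine left_ne_zero_of_mul_eq_one (b := φ (single (-v) 1)) ?_
  rw [← map_mul, single_mul_single, add_neg_cancel, one_mul, ← one_def, map_one]

end AddMonoidAlgebra

theorem Finset.prod_filter_lt_mul_swap {ι M : Type*} [Fintype ι] [LinearOrder ι] [CommMonoid M]
    (f : ι → ι → M) :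
    ∏ p ∈ univ.filter (fun p : ι × ι ↦ p.1 < p.2), f p.1 p.2 * f p.2 p.1 =
      ∏ i, ∏ l ∈ univ.erase i, f i l := by
  have hswap : ∏ p ∈ univ.filter (fun p : ι × ι ↦ p.1 < p.2), f p.2 p.1 =
      ∏ p ∈ univ.filter (fun p : ι × ι ↦ p.2 < p.1), f p.1 p.2 :=
    prod_nbij' Prod.swap Prod.swap (by simp) (by simp) (by simp) (by simp) (by simp)
  rw [prod_mul_distrib, hswap, prod_filter, prod_filter, ← prod_mul_distrib, ← univ_product_univ,
    prod_product]
  refine prod_congr rfl fun i _ ↦ ?_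
  rw [← filter_ne', prod_filter]
  refine prod_congr rfl fun l _ ↦ ?_
  rcases lt_trichotomy i l with h | rfl | h
  · simp [h, h.ne', not_lt_of_gt h]
  · simp
  · simp [h, h.ne, not_lt_of_gt h]

theorem Lagrange.sum_prod_erase_inv_one_sub_div {ι F : Type*} [DecidableEq ι] [Field F]
    {S : Finset ι} (hS : S.Nonempty) {y : ι → F} (hy : Set.InjOn y S) (hy0 : ∀ i ∈ S, y i ≠ 0) :
    ∑ j ∈ S, ∏ l ∈ S.erase j, (1 - y j / y l)⁻¹ = 1 := by
  have h := congrArg (Polynomial.eval 0) (Lagrange.sum_basis hy hS)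
  rw [Polynomial.eval_finsetSum, Polynomial.eval_one] at h
  refine Eq.trans (sum_congr rfl fun j hj ↦ ?_) h
  rw [Lagrange.basis, Polynomial.eval_prod]
  refine prod_congr rfl fun l hl ↦ ?_
  have hl0 := hy0 l (mem_of_mem_erase hl)
  have hne : y j ≠ y l := fun h ↦ ne_of_mem_erase hl (hy hj (mem_of_mem_erase hl) h).symm
  have hjl := sub_ne_zero.2 hne
  have hlj := sub_ne_zero.2 hne.symm
  rw [Lagrange.basisDivisor, Polynomial.eval_mul, Polynomial.eval_C, Polynomial.eval_sub,
    Polynomial.eval_X, Polynomial.eval_C]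
  field_simp
  ring

open scoped Nat in
theorem Nat.sum_multinomial_update_sub_one {α : Type*} [DecidableEq α] {s : Finset α}
    (hs : s.Nonempty) {f : α → ℕ} (hf : ∀ i ∈ s, 0 < f i) :
    ∑ j ∈ s, multinomial s (Function.update f j (f j - 1)) = multinomial s f := by
  have hterm : ∀ j ∈ s, (∏ i ∈ s, (f i)!) * multinomial s (Function.update f j (f j - 1)) =
      f j * (∑ i ∈ s, f i - 1)! := by
    intro j hj
    have hsum : ∑ i ∈ s, Function.update f j (f j - 1) i = ∑ i ∈ s, f i - 1 := by
      rw [sum_update_of_mem hj, sum_eq_add_sum_sdiff_singleton_of_mem hj f]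
      have := hf j hj
      omega
    have hprod : ∏ i ∈ s, (f i)! = f j * ∏ i ∈ s, (Function.update f j (f j - 1) i)! := by
      rw [prod_congr rfl fun i _ ↦ Function.apply_update (fun _ ↦ factorial) f j (f j - 1) i,
        prod_update_of_mem hj, ← mul_assoc, mul_factorial_pred (hf j hj).ne',
        prod_eq_mul_prod_sdiff_singleton_of_mem hj fun i ↦ (f i)!]
    rw [hprod, mul_assoc, multinomial_spec, hsum]
  have hpos : 0 < ∑ i ∈ s, f i := by
    obtain ⟨j, hj⟩ := hs
    exact (hf j hj).trans_le (single_le_sum (fun i _ ↦ zero_le _) hj)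
  refine Nat.eq_of_mul_eq_mul_left (prod_pos (s := s) fun i _ ↦ factorial_pos (f i)) ?_
  rw [mul_sum, sum_congr rfl hterm, ← sum_mul, multinomial_spec, mul_factorial_pred hpos.ne']

namespace Dyson

variable {ι R : Type*} [CommRing R]

noncomputable def freeOf (j : ι) : Subalgebra R R[ι → ℤ] :=
  supportedSubalgebra (AddMonoidHom.mker (Pi.evalAddMonoidHom (fun _ ↦ ℤ) j))

noncomputable def oneAddNegDeg (j : ι) : Submonoid R[ι → ℤ] where
  carrier := {f | f - 1 ∈ supported R R {v | v j < 0}}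
  one_mem' := by simp
  mul_mem' {f g} hf hg := by
    have hneg : ({v | v j < 0} + {v | v j < 0} : Set (ι → ℤ)) ⊆ {v | v j < 0} := by
      rintro _ ⟨u, hu, w, hw, rfl⟩
      exact add_neg (α := ℤ) hu hw
    have hfg : f * g - 1 = (f - 1) * (g - 1) + (f - 1) + (g - 1) := by ring
    show f * g - 1 ∈ supported R R {v | v j < 0}
    rw [hfg]
    exact add_mem (add_mem (supported_mono hneg (mul_mem_supported hf hg)) hf) hg

lemma coeff_mul_zero_of_mem {j : ι} {f g : R[ι → ℤ]} (hf : f ∈ oneAddNegDeg j)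
    (hg : g ∈ freeOf j) : (f * g).coeff 0 = g.coeff 0 := by
  have hneg : (f - 1) * g ∈ supported R R {v | v j < 0} := by
    refine supported_mono ?_ (mul_mem_supported hf hg)
    rintro _ ⟨u, hu, w, hw, rfl⟩
    simp_all
  calc (f * g).coeff 0 = ((f - 1) * g).coeff 0 + g.coeff 0 := by
        rw [← Finsupp.add_apply, ← coeff_add, sub_mul, one_mul, sub_add_cancel]
    _ = g.coeff 0 := by rw [mem_supported'.1 hneg 0 (by simp), zero_add]

variable [DecidableEq ι]

noncomputable def xDiv (i l : ι) : R[ι → ℤ] := single (Pi.single i 1 - Pi.single l 1) 1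

noncomputable def dysonProd (S : Finset ι) (a : ι → ℕ) : R[ι → ℤ] :=
  ∏ i ∈ S, ∏ l ∈ S.erase i, (1 - xDiv i l) ^ a i

lemma dysonProd_eq_mul_erase {S : Finset ι} (a : ι → ℕ) {j : ι} (hj : j ∈ S) :
    dysonProd S a = (∏ l ∈ S.erase j, (1 - xDiv j l : R[ι → ℤ]) ^ a j) *
      (∏ i ∈ S.erase j, (1 - xDiv i j) ^ a i) * dysonProd (S.erase j) a := by
  have hsplit : ∀ i ∈ S.erase j, ∏ l ∈ S.erase i, (1 - xDiv i l : R[ι → ℤ]) ^ a i =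
      (1 - xDiv i j) ^ a i * ∏ l ∈ (S.erase j).erase i, (1 - xDiv i l) ^ a i := by
    intro i hi
    rw [erase_right_comm]
    exact (mul_prod_erase _ (fun l ↦ (1 - xDiv i l) ^ a i)
      (mem_erase.2 ⟨(ne_of_mem_erase hi).symm, hj⟩)).symm
  rw [dysonProd, ← mul_prod_erase S _ hj, prod_congr rfl hsplit, prod_mul_distrib, mul_assoc,
    dysonProd]

lemma one_sub_xDiv_mem_oneAddNegDeg {i j : ι} (h : i ≠ j) :
    (1 - xDiv i j : R[ι → ℤ]) ∈ oneAddNegDeg j := by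
  show (1 - xDiv i j) - 1 ∈ supported R R _
  rw [sub_sub_cancel_left]
  refine neg_mem ?_
  grw [xDiv, mem_supported, coeff_single, Finsupp.support_single_subset]
  simp [h]

lemma xDiv_mem_freeOf {i l j : ι} (hi : i ≠ j) (hl : l ≠ j) :
    (xDiv i l : R[ι → ℤ]) ∈ freeOf j := by
  show _ ∈ supported R R _
  grw [xDiv, mem_supported, coeff_single, Finsupp.support_single_subset]
  simp [hi, hl]

lemma dysonProd_mem_freeOf {S : Finset ι} (a : ι → ℕ) {j : ι} (hj : j ∉ S) :
    (dysonProd S a : R[ι → ℤ]) ∈ freeOf j :=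
  prod_mem fun _ hi ↦ prod_mem fun _ hl ↦ pow_mem (sub_mem (one_mem _) (xDiv_mem_freeOf
    (ne_of_mem_of_not_mem hi hj) (ne_of_mem_of_not_mem (mem_of_mem_erase hl) hj))) _

lemma coeff_dysonProd_of_eq_zero {S : Finset ι} {a : ι → ℕ} {j : ι} (hj : j ∈ S) (haj : a j = 0) :
    (dysonProd S a : R[ι → ℤ]).coeff 0 = (dysonProd (S.erase j) a : R[ι → ℤ]).coeff 0 := by
  rw [dysonProd_eq_mul_erase a hj, haj]
  simp only [pow_zero, prod_const_one, one_mul]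
  exact coeff_mul_zero_of_mem
    (prod_mem fun i hi ↦ pow_mem (one_sub_xDiv_mem_oneAddNegDeg (ne_of_mem_erase hi)) _)
    (dysonProd_mem_freeOf a (S.notMem_erase j))

lemma dysonProd_eq_mul_of_pos {S : Finset ι} (a : ι → ℕ) {j : ι} (hj : j ∈ S) (ha : 0 < a j) :
    dysonProd S a = dysonProd S (Function.update a j (a j - 1)) *
      ∏ l ∈ S.erase j, (1 - xDiv j l : R[ι → ℤ]) := by
  have hcongr : ∀ i ∈ S.erase j, Function.update a j (a j - 1) i = a i := fun i hi ↦
    Function.update_of_ne (ne_of_mem_erase hi) _ _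
  have hcol : ∏ i ∈ S.erase j, (1 - xDiv i j : R[ι → ℤ]) ^ Function.update a j (a j - 1) i =
      ∏ i ∈ S.erase j, (1 - xDiv i j) ^ a i :=
    prod_congr rfl fun i hi ↦ by rw [hcongr i hi]
  have hrest : dysonProd (S.erase j) (Function.update a j (a j - 1)) =
      (dysonProd (S.erase j) a : R[ι → ℤ]) :=
    prod_congr rfl fun i hi ↦ by rw [hcongr i hi]
  have hrow : ∏ l ∈ S.erase j, (1 - xDiv j l : R[ι → ℤ]) ^ a j =
      (∏ l ∈ S.erase j, (1 - xDiv j l) ^ (a j - 1)) * ∏ l ∈ S.erase j, (1 - xDiv j l) := by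
    rw [← prod_mul_distrib, ← Nat.sub_add_cancel ha]
    simp only [pow_succ, Nat.add_sub_cancel]
  rw [dysonProd_eq_mul_erase a hj, dysonProd_eq_mul_erase _ hj, Function.update_self, hcol, hrest,
    hrow]
  ring

lemma map_xDiv {F : Type*} [Field F] (φ : R[ι → ℤ] →+* F) (i l : ι) :
    φ (xDiv i l) = φ (single (Pi.single i 1) 1) / φ (single (Pi.single l 1) 1) := by
  rw [eq_div_iff (map_single_one_ne_zero φ _), ← map_mul, xDiv, single_mul_single, sub_add_cancel,
    one_mul]

lemma dysonProd_eq_sum [IsDomain R] {S : Finset ι} (hS : S.Nonempty) {a : ι → ℕ}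
    (ha : ∀ i ∈ S, 0 < a i) :
    dysonProd S a = ∑ j ∈ S, (dysonProd S (Function.update a j (a j - 1)) : R[ι → ℤ]) := by
  let φ := algebraMap R[ι → ℤ] (FractionRing R[ι → ℤ])
  have hφ : Function.Injective φ := IsFractionRing.injective _ _
  let y i := φ (single (Pi.single i 1) 1)
  have hy : Function.Injective y := fun i l h ↦ by
    have := congrFun ((single_left_injective one_ne_zero) (hφ h)) i
    by_contra hil
    simp [hil] at this
  apply hφ
  rw [map_sum, ← mul_one (φ (dysonProd S a)), ← Lagrange.sum_prod_erase_inv_one_sub_div hS hy.injOn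
    fun i _ ↦ map_single_one_ne_zero φ _, mul_sum]
  refine sum_congr rfl fun j hj ↦ ?_
  rw [dysonProd_eq_mul_of_pos a hj (ha j hj), map_mul, map_prod, mul_assoc, ← prod_mul_distrib,
    prod_eq_one, mul_one]
  intro l hl
  have hne : y j / y l ≠ 1 := by
    rw [Ne, div_eq_one_iff_eq (map_single_one_ne_zero φ _)]
    exact hy.ne (ne_of_mem_erase hl).symm
  rw [map_sub, map_one, map_xDiv, mul_inv_cancel₀ (sub_ne_zero.2 hne.symm)]

theorem coeff_dysonProd_zero [IsDomain R] (S : Finset ι) (a : ι → ℕ) :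
    (dysonProd S a : R[ι → ℤ]).coeff 0 = Nat.multinomial S a := by
  by_cases hzero : ∃ j ∈ S, a j = 0
  · obtain ⟨j, hj, haj⟩ := hzero
    rw [coeff_dysonProd_of_eq_zero hj haj, coeff_dysonProd_zero (S.erase j) a,
      Nat.multinomial_congr_of_sdiff (erase_subset j S) (by simp_all) fun _ _ ↦ rfl]
  push Not at hzero
  have ha : ∀ i ∈ S, 0 < a i := fun i hi ↦ Nat.pos_of_ne_zero (hzero i hi)
  rcases S.eq_empty_or_nonempty with rfl | hS
  · simp [dysonProd, one_def]
  rw [dysonProd_eq_sum hS ha, coeff_sum, Finsupp.finsetSum_apply,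
    ← Nat.sum_multinomial_update_sub_one hS ha, Nat.cast_sum]
  exact sum_congr rfl fun j hj ↦ coeff_dysonProd_zero S _
termination_by (∑ i ∈ S, a i) + #S
decreasing_by
  · rw [sum_erase S haj]
    exact Nat.add_lt_add_left (card_erase_lt_of_mem hj) _
  · rw [sum_update_of_mem hj, sum_eq_add_sum_sdiff_singleton_of_mem hj a]
    have := ha j hj
    omega

end Dyson

theorem dyson_constant_term_identity_general (n : ℕ) (k : ℕ) :
    ((∏ p ∈ Finset.univ.filter (fun p : Fin n × Fin n => p.1 < p.2),
        (1 - AddMonoidAlgebra.single ((Pi.single p.1 1 - Pi.single p.2 1 : Fin n → ℤ)) (1 : ℚ)) ^ k *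
        (1 - AddMonoidAlgebra.single ((Pi.single p.2 1 - Pi.single p.1 1 : Fin n → ℤ)) (1 : ℚ)) ^ k :
      AddMonoidAlgebra ℚ (Fin n → ℤ)).coeff (0 : Fin n → ℤ) : ℚ) =
      (Nat.factorial (n * k) : ℚ) / (Nat.factorial k : ℚ) ^ n := by
  have hspec := Nat.multinomial_spec (univ : Finset (Fin n)) fun _ ↦ k
  simp only [prod_const, sum_const, card_univ, Fintype.card_fin, smul_eq_mul] at hspec
  calc _ = ((Dyson.dysonProd univ fun _ ↦ k : ℚ[Fin n → ℤ]).coeff 0 : ℚ) :=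
        congrArg (fun f : ℚ[Fin n → ℤ] ↦ f.coeff 0)
          (prod_filter_lt_mul_swap fun i l ↦ (1 - Dyson.xDiv i l) ^ k)
    _ = Nat.multinomial univ fun _ ↦ k := Dyson.coeff_dysonProd_zero _ _
    _ = _ := by
      rw [eq_div_iff (by positivity)]
      exact_mod_cast (mul_comm _ _).trans hspec

/-- **Dyson's constant term identity** (the Macdonald constant term conjecture for the
root system of type `A_{n-1}`).  We work in the group algebra `ℚ[ℤ^n]`, realized as
`AddMonoidAlgebra ℚ (Fin n → ℤ)`, whose element `single v 1` is the Laurent monomial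
`x^v = x₁^{v 1} ⋯ xₙ^{v n}`; the constant term of a Laurent polynomial is its
coefficient at the lattice point `0`.  The claim: for every positive integer `n` and
every `k : ℕ`, the constant term of
`∏_{1 ≤ i < j ≤ n} (1 - xᵢ xⱼ⁻¹)^k (1 - xⱼ xᵢ⁻¹)^k` equals `(nk)! / (k!)^n`. -/
theorem dyson_constant_term_identity (n : ℕ) (hn : 0 < n) (k : ℕ) :
    ((∏ p ∈ Finset.univ.filter (fun p : Fin n × Fin n => p.1 < p.2),
        (1 - AddMonoidAlgebra.single ((Pi.single p.1 1 - Pi.single p.2 1 : Fin n → ℤ)) (1 : ℚ)) ^ k *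
        (1 - AddMonoidAlgebra.single ((Pi.single p.2 1 - Pi.single p.1 1 : Fin n → ℤ)) (1 : ℚ)) ^ k :
      AddMonoidAlgebra ℚ (Fin n → ℤ)).coeff (0 : Fin n → ℤ) : ℚ) =
      (Nat.factorial (n * k) : ℚ) / (Nat.factorial k : ℚ) ^ n :=
  dyson_constant_term_identity_general n k
end
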